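/- arXiv:2208.13042 — 6 statements merged into one kernel-verified Lean document; each statement's English description precedes it below -/
import Mathlib

section
/- Let G be a finite cyclic group whose order is not a prime power. Then for every x ∈ G \ {1} that does not generate G, there exists y ∈ G such that x and y are not joined in the power graph, i.e., x is not a power of y and y is not a power of x. -/
/-!
In a cyclic group of order `n` there is an element of every order `m ∣ n`, and `x = y ^ k` forces
`orderOf x ∣ orderOf y`. So it suffices to find a divisor `m` of `n` incomparable under divisibility
with `d = orderOf x`, where `1 < d < n`. Some prime `p` divides `n` to a higher power than `d`; take
`m = p ^ (v_p(d) + 1)`, unless `d` is itself a power of `p`, in which case any other prime divisor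
of `n` (which exists as `n` is not a prime power) will do.
-/

theorem Nat.exists_dvd_not_dvd_and_not_dvd_of_not_isPrimePow {n d : ℕ} (hn : ¬ IsPrimePow n)
    (hdn : d ∣ n) (hd1 : d ≠ 1) (hdlt : d < n) : ∃ m, m ∣ n ∧ ¬ m ∣ d ∧ ¬ d ∣ m := by
  have hd0 : d ≠ 0 := by rintro rfl; exact hdlt.ne (zero_dvd_iff.mp hdn).symm
  obtain ⟨p, hlt⟩ := Nat.exists_factorization_lt_of_lt hd0 hdlt
  have hp : p.Prime := Nat.prime_of_mem_primeFactors (Nat.support_factorization n ▸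
    Finsupp.mem_support_iff.mpr (by omega))
  by_cases hdp : ∃ b, d = p ^ b
  · obtain ⟨b, rfl⟩ := hdp
    have hpd : p ∣ p ^ b := dvd_pow_self p fun hb => hd1 (hb ▸ pow_zero p)
    obtain ⟨q, ⟨hq, hqn⟩, hqp⟩ : ∃ q, (q.Prime ∧ q ∣ n) ∧ q ≠ p := by
      by_contra! hall
      exact hn (isPrimePow_iff_unique_prime_dvd.mpr ⟨p, ⟨hp, hpd.trans hdn⟩, hall⟩)
    refine ⟨q, hqn, fun hqd => hqp ?_, fun hdq => hqp ?_⟩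
    · exact (Nat.prime_dvd_prime_iff_eq hq hp).mp (hq.dvd_of_dvd_pow hqd)
    · exact ((Nat.prime_dvd_prime_iff_eq hp hq).mp (hpd.trans hdq)).symm
  · refine ⟨p ^ (d.factorization p + 1), (hp.pow_dvd_iff_le_factorization (by omega)).mpr hlt,
      fun hpd => ?_, fun hdp' => hdp ?_⟩
    · have := (hp.pow_dvd_iff_le_factorization hd0).mp hpd
      omega
    · obtain ⟨c, -, rfl⟩ := (Nat.dvd_prime_pow hp).mp hdp'
      exact ⟨c, rfl⟩

theorem IsCyclic.exists_orderOf_eq_of_dvd_natCard {G : Type*} [Group G] [Finite G] [IsCyclic G]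
    {m : ℕ} (hm : m ∣ Nat.card G) : ∃ y : G, orderOf y = m := by
  obtain ⟨g, hg⟩ := IsCyclic.exists_ofOrder_eq_natCard (α := G)
  exact ⟨g ^ (Nat.card G / m), hg ▸ orderOf_pow_orderOf_div (hg ▸ Nat.card_pos.ne') (hg ▸ hm)⟩

theorem orderOf_lt_natCard_of_zpowers_ne_top {G : Type*} [Group G] [Finite G] {x : G}
    (hx : Subgroup.zpowers x ≠ ⊤) : orderOf x < Nat.card G :=
  (Nat.le_of_dvd Nat.card_pos (orderOf_dvd_natCard x)).lt_of_ne fun h =>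
    hx (Subgroup.eq_top_of_card_eq _ (by rw [Nat.card_zpowers, h]))

theorem exists_not_joined_of_not_generator {G : Type*} [Group G] [Finite G]
    [IsCyclic G] (h : ¬ ∃ p n : ℕ, p.Prime ∧ Nat.card G = p ^ n)
    (x : G) (hx1 : x ≠ 1) (hxgen : Subgroup.zpowers x ≠ ⊤) :
    ∃ y : G, ¬ (∃ m : ℕ, 0 < m ∧ x = y ^ m) ∧ ¬ (∃ m : ℕ, 0 < m ∧ y = x ^ m) := by
  have hG : ¬ IsPrimePow (Nat.card G) := fun hG => by
    obtain ⟨p, k, hp, -, hk⟩ := (isPrimePow_nat_iff _).mp hG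
    exact h ⟨p, k, hp, hk.symm⟩
  obtain ⟨m, hmG, hmx, hxm⟩ := Nat.exists_dvd_not_dvd_and_not_dvd_of_not_isPrimePow hG
    (orderOf_dvd_natCard x) (mt orderOf_eq_one_iff.mp hx1)
    (orderOf_lt_natCard_of_zpowers_ne_top hxgen)
  obtain ⟨y, rfl⟩ := IsCyclic.exists_orderOf_eq_of_dvd_natCard hmG
  refine ⟨y, ?_, ?_⟩
  · rintro ⟨k, -, rfl⟩
    exact hxm (orderOf_pow_dvd k)
  · rintro ⟨k, -, rfl⟩
    exact hmx (orderOf_pow_dvd k)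
end

section
/- Let G be a finite group. The power graph P(G) is a complete graph if and only if G is cyclic of prime power order. -/
/-!
Over a finite group, "`x` is a positive power of `y`" just means `x ∈ zpowers y`, so `P(G)` is
complete exactly when any two cyclic subgroups `⟨x⟩, ⟨y⟩` are comparable. If they are, an element
of maximal order generates a cyclic subgroup contained in no larger one, hence generates `G`; and
elements of two distinct prime orders (Cauchy) would be incomparable. Conversely, in a cyclic
group the cyclic subgroup of each order is unique, so when all orders are powers of one prime,
divisibility of orders makes the cyclic subgroups comparable.
-/

/-- The power graph of a group: distinct `x, y` are adjacent iff one is a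
positive power of the other. -/
def powerGraph (G : Type*) [Group G] : SimpleGraph G :=
  SimpleGraph.fromRel (fun x y => ∃ m : ℕ, 0 < m ∧ x = y ^ m)

open Subgroup

section

variable {G : Type*} [Group G]

theorem exists_pos_pow_eq_iff_mem_zpowers [Finite G] {x y : G} :
    (∃ m : ℕ, 0 < m ∧ x = y ^ m) ↔ x ∈ zpowers y := by
  refine ⟨fun ⟨m, _, hm⟩ => hm ▸ npow_mem_zpowers y m, fun hx => ?_⟩
  obtain ⟨k, hk⟩ := mem_powers_iff_mem_zpowers.mpr hx
  refine ⟨k + orderOf y, Nat.add_pos_right k (orderOf_pos y), ?_⟩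
  rw [pow_add, pow_orderOf_eq_one, mul_one]
  exact hk.symm

theorem powerGraph_eq_top_iff [Finite G] :
    powerGraph G = ⊤ ↔ ∀ x y : G, x ∈ zpowers y ∨ y ∈ zpowers x := by
  simp only [SimpleGraph.ext_iff, funext_iff, eq_iff_iff, powerGraph, SimpleGraph.fromRel_adj,
    SimpleGraph.top_adj, exists_pos_pow_eq_iff_mem_zpowers, and_iff_left_iff_imp]
  refine ⟨fun h x y => ?_, fun h x y _ => h x y⟩
  by_cases hxy : x = y
  · exact .inl (hxy ▸ mem_zpowers x)
  · exact h x y hxy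

theorem isCyclic_of_forall_mem_zpowers_or_mem_zpowers [Finite G]
    (h : ∀ x y : G, x ∈ zpowers y ∨ y ∈ zpowers x) : IsCyclic G := by
  obtain ⟨g, hg⟩ := Finite.exists_max (orderOf : G → ℕ)
  refine ⟨g, fun y => (h y g).elim id fun hgy => ?_⟩
  have : zpowers g = zpowers y :=
    eq_of_le_of_card_ge (zpowers_le_of_mem hgy) (by simpa only [Nat.card_zpowers] using hg y)
  show y ∈ zpowers g
  exact this ▸ mem_zpowers y

theorem eq_of_prime_dvd_natCard_of_forall_mem_zpowers_or_mem_zpowers [Finite G]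
    (h : ∀ x y : G, x ∈ zpowers y ∨ y ∈ zpowers x) {p q : ℕ} (hp : p.Prime) (hq : q.Prime)
    (hpG : p ∣ Nat.card G) (hqG : q ∣ Nat.card G) : p = q := by
  have := Fact.mk hp
  have := Fact.mk hq
  obtain ⟨x, hx⟩ := exists_prime_orderOf_dvd_card' p hpG
  obtain ⟨y, hy⟩ := exists_prime_orderOf_dvd_card' q hqG
  rcases h x y with hxy | hyx
  · exact (Nat.prime_dvd_prime_iff_eq hp hq).mp (hx ▸ hy ▸ orderOf_dvd_of_mem_zpowers hxy)
  · exact ((Nat.prime_dvd_prime_iff_eq hq hp).mp (hx ▸ hy ▸ orderOf_dvd_of_mem_zpowers hyx)).symm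

theorem exists_prime_pow_eq_natCard_of_forall_mem_zpowers_or_mem_zpowers [Finite G]
    (h : ∀ x y : G, x ∈ zpowers y ∨ y ∈ zpowers x) :
    ∃ p n : ℕ, p.Prime ∧ Nat.card G = p ^ n := by
  by_cases h1 : Nat.card G = 1
  · exact ⟨2, 0, Nat.prime_two, h1⟩
  have hp := Nat.minFac_prime h1
  exact ⟨_, _, hp, Nat.eq_prime_pow_of_unique_prime_dvd Nat.card_pos.ne' fun hq hqG =>
    eq_of_prime_dvd_natCard_of_forall_mem_zpowers_or_mem_zpowers h hq hp hqG (Nat.minFac_dvd _)⟩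

/-- A cyclic group has at most `d` solutions of `a ^ d = 1`, and for `d = orderOf y` the subgroup
`zpowers y` already supplies `d` of them. -/
theorem IsCyclic.mem_zpowers_of_orderOf_dvd [Finite G] [IsCyclic G] {x y : G}
    (h : orderOf x ∣ orderOf y) : x ∈ zpowers y := by
  classical
  have := Fintype.ofFinite G
  have hsub : (zpowers y : Set G).toFinset ⊆ ({a | a ^ orderOf y = 1} : Finset G) := fun a ha => by
    simpa [orderOf_dvd_iff_pow_eq_one] using orderOf_dvd_of_mem_zpowers (Set.mem_toFinset.mp ha)
  have heq := Finset.eq_of_subset_of_card_le hsub <| by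
    simpa [Set.toFinset_card, Fintype.card_zpowers] using
      IsCyclic.card_pow_eq_one_le (α := G) (orderOf_pos y)
  have hx : x ∈ ({a | a ^ orderOf y = 1} : Finset G) := by
    simpa using orderOf_dvd_iff_pow_eq_one.mp h
  simpa [← heq] using hx

theorem IsCyclic.mem_zpowers_or_mem_zpowers_of_natCard_eq_prime_pow [IsCyclic G] {p n : ℕ}
    (hp : p.Prime) (hG : Nat.card G = p ^ n) (x y : G) : x ∈ zpowers y ∨ y ∈ zpowers x := by
  have := Nat.finite_of_card_ne_zero (hG ▸ pow_ne_zero n hp.ne_zero)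
  obtain ⟨a, -, ha⟩ := (Nat.dvd_prime_pow hp).mp (hG ▸ orderOf_dvd_natCard x)
  obtain ⟨b, -, hb⟩ := (Nat.dvd_prime_pow hp).mp (hG ▸ orderOf_dvd_natCard y)
  rcases le_total a b with hab | hba
  · exact .inl (mem_zpowers_of_orderOf_dvd (ha ▸ hb ▸ pow_dvd_pow p hab))
  · exact .inr (mem_zpowers_of_orderOf_dvd (hb ▸ ha ▸ pow_dvd_pow p hba))

end

theorem powerGraph_complete_iff {G : Type*} [Group G] [Finite G] :
    powerGraph G = ⊤ ↔
      IsCyclic G ∧ ∃ p n : ℕ, p.Prime ∧ Nat.card G = p ^ n := by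
  rw [powerGraph_eq_top_iff]
  refine ⟨fun h => ⟨isCyclic_of_forall_mem_zpowers_or_mem_zpowers h,
    exists_prime_pow_eq_natCard_of_forall_mem_zpowers_or_mem_zpowers h⟩, ?_⟩
  rintro ⟨_, p, n, hp, hG⟩
  exact IsCyclic.mem_zpowers_or_mem_zpowers_of_natCard_eq_prime_pow hp hG
end

section
/- Let G be a finite group, and let X = [x] and Y = [y] be two distinct classes of the relation ⟨a⟩ = ⟨b⟩ such that some element of each class is a power of an element of the other joined pair (the classes are joined in the directed power graph) and |X| > |Y|. Then every element of Y is a power of every element of X. -/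
/-!
If `y` is a power of `x`, then `⟨y⟩ ≤ ⟨x⟩`, so `orderOf y ∣ orderOf x`; since the class `[z]` consists
of the `φ (orderOf z)` generators of `⟨z⟩`, this gives `|[y]| ≤ |[x]|`. Hence the strict inequality
`|[y]| < |[x]|` forces the join to go from `x` down to `y`, i.e. `⟨y⟩ ≤ ⟨x⟩`, and every generator of
`⟨y⟩` is then a power of every generator of `⟨x⟩`; in a finite group the exponent can be taken positive.
-/

open Subgroup

section

variable {G : Type*} [Group G]

lemma zpowers_pow_le (b : G) (m : ℕ) : zpowers (b ^ m) ≤ zpowers b :=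
  zpowers_le.2 (pow_mem (mem_zpowers b) m)

variable [Finite G]

lemma zpowers_eq_zpowers_iff_mem_and_orderOf_eq {x z : G} :
    zpowers z = zpowers x ↔ z ∈ zpowers x ∧ orderOf z = orderOf x := by
  refine ⟨fun h ↦ ⟨h ▸ mem_zpowers z, by rw [← Nat.card_zpowers, h, Nat.card_zpowers]⟩, ?_⟩
  rintro ⟨hz, hord⟩
  exact eq_of_le_of_card_ge (zpowers_le.2 hz) (by rw [Nat.card_zpowers, Nat.card_zpowers, hord])

lemma ncard_setOf_zpowers_eq_zpowers (x : G) :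
    {z : G | zpowers z = zpowers x}.ncard = (orderOf x).totient := by
  classical
  have : Fintype G := Fintype.ofFinite G
  have hset : {z : G | zpowers z = zpowers x} =
      Subtype.val '' {w : zpowers x | orderOf w = orderOf x} := by
    ext z
    constructor
    · intro h
      obtain ⟨hz, hord⟩ := zpowers_eq_zpowers_iff_mem_and_orderOf_eq.1 h
      exact ⟨⟨z, hz⟩, by rwa [Set.mem_ofPred_eq, orderOf_mk], rfl⟩
    · rintro ⟨⟨w, hw⟩, hord, rfl⟩
      rw [Set.mem_ofPred_eq, orderOf_mk] at hord
      exact zpowers_eq_zpowers_iff_mem_and_orderOf_eq.2 ⟨hw, hord⟩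
  rw [hset, Set.ncard_image_of_injective _ Subtype.val_injective, Set.ncard_eq_toFinset_card',
    Set.toFinset_ofPred]
  exact IsCyclic.card_orderOf_eq_totient (Fintype.card_zpowers (x := x)).symm.dvd

lemma totient_orderOf_le_of_zpowers_le {x y : G} (h : zpowers x ≤ zpowers y) :
    (orderOf x).totient ≤ (orderOf y).totient :=
  Nat.le_of_dvd (Nat.totient_pos.2 (orderOf_pos y))
    (Nat.totient_dvd_of_dvd (orderOf_dvd_of_mem_zpowers (h (mem_zpowers x))))

lemma exists_pos_pow_eq_of_mem_zpowers {a b : G} (h : b ∈ zpowers a) :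
    ∃ m : ℕ, 0 < m ∧ b = a ^ m := by
  obtain ⟨n, rfl⟩ := mem_powers_iff_mem_zpowers.2 h
  exact ⟨n + orderOf a, by have := orderOf_pos a; omega, by
    rw [pow_add, pow_orderOf_eq_one, mul_one]⟩

end

theorem diamond_classes_bigger_dominates_general {G : Type*} [Group G] [Finite G]
    (x y : G)
    (hjoin : ∃ a b : G, Subgroup.zpowers a = Subgroup.zpowers x ∧
      Subgroup.zpowers b = Subgroup.zpowers y ∧
        ∃ m : ℕ, 0 < m ∧ (a = b ^ m ∨ b = a ^ m))
    (hcard : {z : G | Subgroup.zpowers z = Subgroup.zpowers y}.ncard <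
      {z : G | Subgroup.zpowers z = Subgroup.zpowers x}.ncard) :
    ∀ a b : G, Subgroup.zpowers a = Subgroup.zpowers x →
      Subgroup.zpowers b = Subgroup.zpowers y →
        ∃ m : ℕ, 0 < m ∧ b = a ^ m := by
  rw [ncard_setOf_zpowers_eq_zpowers, ncard_setOf_zpowers_eq_zpowers] at hcard
  obtain ⟨a', b', ha', hb', m, -, hpow⟩ := hjoin
  have hyx : zpowers y ≤ zpowers x := by
    rcases hpow with rfl | rfl
    · have hxy : zpowers x ≤ zpowers y := ha' ▸ hb' ▸ zpowers_pow_le b' m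
      exact absurd (totient_orderOf_le_of_zpowers_le hxy) hcard.not_ge
    · exact ha' ▸ hb' ▸ zpowers_pow_le a' m
  intro a b ha hb
  exact exists_pos_pow_eq_of_mem_zpowers (ha ▸ hyx (hb ▸ mem_zpowers b))

theorem diamond_classes_bigger_dominates {G : Type*} [Group G] [Finite G]
    (x y : G) (hXY : Subgroup.zpowers x ≠ Subgroup.zpowers y)
    (hjoin : ∃ a b : G, Subgroup.zpowers a = Subgroup.zpowers x ∧
      Subgroup.zpowers b = Subgroup.zpowers y ∧
        ∃ m : ℕ, 0 < m ∧ (a = b ^ m ∨ b = a ^ m))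
    (hcard : {z : G | Subgroup.zpowers z = Subgroup.zpowers y}.ncard <
      {z : G | Subgroup.zpowers z = Subgroup.zpowers x}.ncard) :
    ∀ a b : G, Subgroup.zpowers a = Subgroup.zpowers x →
      Subgroup.zpowers b = Subgroup.zpowers y →
        ∃ m : ℕ, 0 < m ∧ b = a ^ m :=
  diamond_classes_bigger_dominates_general x y hjoin hcard
end

section
/- Let G be a finite abelian group and let x, y be distinct elements of G with N[x] = N[y] in the power graph. Then one of the following holds: (a) ⟨x⟩ = ⟨y⟩; (b) G is cyclic, and one of x, y is a generator of G and the other is the identity; (c) G is cyclic of prime power order. -/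
/-- The closed neighbourhood of a vertex in the power graph. -/
def closedNbhd {G : Type*} [Group G] (x : G) : Set G :=
  insert x ((powerGraph G).neighborSet x)

lemma rel_iff {G : Type*} [Group G] [Finite G] (a b : G) :
    (∃ m : ℕ, 0 < m ∧ a = b ^ m) ↔ a ∈ Subgroup.zpowers b := by
  constructor
  · rintro ⟨m, -, rfl⟩
    exact zpow_natCast b m ▸ Subgroup.zpow_mem _ (Subgroup.mem_zpowers b) (m:ℤ)
  · intro hab
    obtain ⟨n, hn⟩ := (mem_powers_iff_mem_zpowers).2 hab
    rcases Nat.eq_zero_or_pos n with rfl | hpos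
    · exact ⟨orderOf b, orderOf_pos b, by simp [← hn, pow_orderOf_eq_one]⟩
    · exact ⟨n, hpos, hn.symm⟩

lemma mem_closedNbhd_iff {G : Type*} [Group G] [Finite G] (x z : G) :
    z ∈ closedNbhd x ↔ z = x ∨ z ∈ Subgroup.zpowers x ∨ x ∈ Subgroup.zpowers z := by
  unfold closedNbhd
  rw [Set.mem_insert_iff, SimpleGraph.mem_neighborSet]
  unfold powerGraph
  rw [SimpleGraph.fromRel_adj]
  constructor
  · rintro (rfl | ⟨hne, hr | hr⟩)
    · exact Or.inl rfl
    · exact Or.inr (Or.inr (rel_iff x z |>.1 hr))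
    · exact Or.inr (Or.inl (rel_iff z x |>.1 hr))
  · rintro (rfl | hz | hx)
    · exact Or.inl rfl
    · by_cases hzx : z = x
      · exact Or.inl hzx
      · exact Or.inr ⟨Ne.symm hzx, Or.inr ((rel_iff z x).2 hz)⟩
    · by_cases hzx : z = x
      · exact Or.inl hzx
      · exact Or.inr ⟨Ne.symm hzx, Or.inl ((rel_iff x z).2 hx)⟩

open Subgroup

lemma isCyclic_zpowers {G : Type*} [Group G] (y : G) : IsCyclic (Subgroup.zpowers y) := by
  refine ⟨⟨y, Subgroup.mem_zpowers y⟩, ?_⟩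
  rintro ⟨x, hx⟩
  obtain ⟨k, rfl⟩ := Subgroup.mem_zpowers_iff.1 hx
  exact ⟨k, by ext; simp⟩

lemma cardTorsionLe {G : Type*} [Group G] [Finite G] (y : G) {p : ℕ} (hp : 0 < p)
    (hsub : ∀ a : G, a ^ p = 1 → a ∈ Subgroup.zpowers y) :
    Nat.card {a : G // a ^ p = 1} ≤ p := by
  classical
  have : Fintype (Subgroup.zpowers y) := Fintype.ofFinite _
  have hcyc : IsCyclic (Subgroup.zpowers y) := _root_.isCyclic_zpowers y
  have hinj : Function.Injective (fun a : {a : G // a ^ p = 1} =>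
      (⟨⟨a.1, hsub a.1 a.2⟩, by ext; simpa using a.2⟩ :
        {b : Subgroup.zpowers y // b ^ p = 1})) := by
    intro a b hab
    simp only [Subtype.mk.injEq] at hab
    exact Subtype.ext hab
  calc Nat.card {a : G // a ^ p = 1}
      ≤ Nat.card {b : Subgroup.zpowers y // b ^ p = 1} :=
        Nat.card_le_card_of_injective _ hinj
    _ ≤ p := by
        have := IsCyclic.card_pow_eq_one_le (α := Subgroup.zpowers y) hp
        rw [Nat.card_eq_fintype_card, Fintype.card_subtype]
        convert this using 2

lemma cardTorsionTrivial {G : Type*} [Group G] {p : ℕ} (hp : p.Prime)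
    (hno : ∀ a : G, orderOf a ≠ p) : Nat.card {a : G // a ^ p = 1} ≤ p := by
  have h1 : ∀ a : {a : G // a ^ p = 1}, a.1 = 1 := by
    intro a
    by_contra h1
    haveI := Fact.mk hp
    exact hno a.1 (orderOf_eq_prime a.2 h1)
  have hinj : Function.Injective (fun _ : {a : G // a ^ p = 1} => (() : Unit)) := by
    intro a b _
    ext
    rw [h1 a, h1 b]
  calc Nat.card {a : G // a ^ p = 1} ≤ Nat.card Unit :=
        Nat.card_le_card_of_injective _ hinj
    _ ≤ p := by simpa using hp.one_lt.le

lemma mem_of_forall_primePow {G : Type*} [CommGroup G] [Finite G] {H : Subgroup G}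
    (h : ∀ g : G, IsPrimePow (orderOf g) → g ∈ H) : ∀ g : G, g ∈ H := by
  have main : ∀ n : ℕ, ∀ g : G, orderOf g = n → g ∈ H := by
    intro n
    induction n using Nat.strong_induction_on with
    | _ n IH =>
      intro g hg
      rcases eq_or_ne n 1 with rfl | hn1
      · rw [orderOf_eq_one_iff.1 hg]; exact H.one_mem
      by_cases hpp : IsPrimePow n
      · exact h g (hg ▸ hpp)
      have hn0 : n ≠ 0 := fun h0 => (orderOf_pos g).ne' (h0 ▸ hg)
      have hp : n.minFac.Prime := Nat.minFac_prime hn1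
      have ha1 : 1 ≤ n.factorization n.minFac :=
        hp.factorization_pos_of_dvd hn0 (Nat.minFac_dvd n)
      obtain ⟨m, k, hmd, hnk, hm1, hco, hmpp⟩ :
          ∃ m k : ℕ, m ∣ n ∧ n = m * k ∧ 1 < m ∧ Nat.Coprime m k ∧ IsPrimePow m := by
        refine ⟨_, _, Nat.ordProj_dvd n n.minFac,
          (Nat.mul_div_cancel' (Nat.ordProj_dvd n n.minFac)).symm, ?_,
          Nat.Coprime.pow_left _ (Nat.coprime_ordCompl hp hn0),
          ⟨n.minFac, n.factorization n.minFac, hp.prime, by omega, rfl⟩⟩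
        calc 1 < n.minFac := hp.one_lt
          _ ≤ _ := Nat.le_self_pow (by omega) _
      have hm0 : 0 < m := by omega
      have hk0 : k ≠ 0 := by rintro rfl; omega
      have hk1 : k ≠ 1 := by rintro rfl; rw [mul_one] at hnk; exact hpp (hnk ▸ hmpp)
      have hkn : k < n := by rw [hnk]; nlinarith [Nat.pos_of_ne_zero hk0]
      have hmn : m < n := by rw [hnk]; nlinarith [(by omega : 2 ≤ k)]
      have hgm : orderOf (g ^ m) = k := by
        rw [orderOf_pow' g hm0.ne', hg, Nat.gcd_eq_right hmd, hnk,
          Nat.mul_div_cancel_left _ hm0]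
      have hkd : k ∣ n := ⟨m, by rw [hnk]; exact Nat.mul_comm m k⟩
      have hgk : orderOf (g ^ k) = m := by
        rw [orderOf_pow' g hk0, hg, Nat.gcd_eq_right hkd, hnk,
          Nat.mul_div_cancel _ (Nat.pos_of_ne_zero hk0)]
      have h1 : (g ^ m) ∈ H := IH k hkn _ hgm
      have h2 : (g ^ k) ∈ H := IH m hmn _ hgk
      -- Bezout
      have hb := Nat.gcd_eq_gcd_ab m k
      rw [hco] at hb
      have : g = (g ^ m) ^ Nat.gcdA m k * (g ^ k) ^ Nat.gcdB m k := by
        rw [← zpow_natCast g m, ← zpow_natCast g k, ← zpow_mul, ← zpow_mul, ← zpow_add,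
          ← hb]
        simp
      rw [this]
      exact H.mul_mem (H.zpow_mem h1 _) (H.zpow_mem h2 _)
  exact fun g => main (orderOf g) g rfl

lemma exists_orderOf_eq_prime_of_dvd {G : Type*} [Group G] [Finite G] {g : G} {l : ℕ}
    (hl : l.Prime) (hdvd : l ∣ orderOf g) : ∃ a : G, orderOf a = l := by
  refine ⟨g ^ (orderOf g / l), ?_⟩
  have hn0 : orderOf g ≠ 0 := (orderOf_pos g).ne'
  have hne : orderOf g / l ≠ 0 := by
    have := Nat.le_of_dvd (Nat.pos_of_ne_zero hn0) hdvd
    have := Nat.div_pos this hl.pos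
    omega
  rw [orderOf_pow' g hne, Nat.gcd_eq_right (Nat.div_dvd_of_dvd hdvd),
    Nat.div_div_self hdvd hn0]


lemma lemA {G : Type*} [CommGroup G] [Finite G]
    (h : ∀ p : ℕ, p.Prime → Nat.card {a : G // a ^ p = 1} ≤ p) :
    IsCyclic G := by
  have key : ∀ n : ℕ, 0 < n → Nat.card {a : G // a ^ n = 1} ≤ n := by
    intro n
    induction n using Nat.strong_induction_on with
    | _ n IH =>
      intro hn
      rcases eq_or_ne n 1 with rfl | hn1
      · have hinj : Function.Injective (fun _ : {a : G // a ^ 1 = 1} => (() : Unit)) := by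
          intro a b _
          ext
          rw [show (a : G) = 1 from by simpa using a.2, show (b : G) = 1 from by simpa using b.2]
        simpa using Nat.card_le_card_of_injective _ hinj
      by_cases hp : n.Prime
      · exact h n hp
      · set p := n.minFac with hpdef
        have hpp : p.Prime := Nat.minFac_prime hn1
        have hpd : p ∣ n := Nat.minFac_dvd n
        set m := n / p with hmdef
        have hnm : n = p * m := (Nat.mul_div_cancel' hpd).symm
        have hp2 : 2 ≤ p := hpp.two_le
        have hm0 : 0 < m := Nat.div_pos (Nat.le_of_dvd hn hpd) (by omega)
        have hmn : m < n := by
          rcases Nat.lt_or_ge m n with h0 | h0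
          · exact h0
          · exfalso; nlinarith
        -- the subgroup T = ker (powMonoidHom n)
        set T : Subgroup G := (powMonoidHom n : G →* G).ker with hT
        have hTmem : ∀ a : G, a ∈ T ↔ a ^ n = 1 := by
          intro a; simp [hT, MonoidHom.mem_ker, powMonoidHom_apply]
        set φ : T →* G := (powMonoidHom m : G →* G).comp T.subtype with hφ
        have hcard : Nat.card T = Nat.card (T ⧸ φ.ker) * Nat.card φ.ker :=
          Subgroup.card_eq_card_quotient_mul_card_subgroup φ.ker
        -- quotient ≤ p
        have hquot : Nat.card (T ⧸ φ.ker) ≤ p := by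
          have e := Nat.card_congr (QuotientGroup.quotientKerEquivRange φ).toEquiv
          rw [e]
          have hinj : Function.Injective
              (fun b : φ.range => (⟨(b : G), by
                obtain ⟨a, ha⟩ := b.2
                have han : (a : G) ^ n = 1 := (hTmem a).1 a.2
                have : (b : G) ^ p = 1 := by
                  rw [← ha]
                  simp only [hφ, MonoidHom.comp_apply, powMonoidHom_apply, Subgroup.coe_subtype]
                  rw [← pow_mul, mul_comm m p, ← hnm, han]
                exact this⟩ : {a : G // a ^ p = 1})) := by
            intro a b hab
            simp only [Subtype.mk.injEq] at hab
            exact Subtype.ext hab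
          calc Nat.card φ.range ≤ Nat.card {a : G // a ^ p = 1} :=
                Nat.card_le_card_of_injective _ hinj
            _ ≤ p := h p hpp
        -- kernel ≤ m
        have hker : Nat.card φ.ker ≤ m := by
          have hinj : Function.Injective
              (fun b : φ.ker => (⟨((b : T) : G), by
                have := b.2
                simp only [hφ, MonoidHom.mem_ker, MonoidHom.comp_apply,
                  powMonoidHom_apply, Subgroup.coe_subtype] at this
                exact this⟩ : {a : G // a ^ m = 1})) := by
            intro a b hab
            simp only [Subtype.mk.injEq] at hab
            exact Subtype.ext (Subtype.ext hab)
          calc Nat.card φ.ker ≤ Nat.card {a : G // a ^ m = 1} :=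
                Nat.card_le_card_of_injective _ hinj
            _ ≤ m := IH m hmn hm0
        have : Nat.card T ≤ p * m := by
          rw [hcard]; exact Nat.mul_le_mul hquot hker
        have hTcard : Nat.card {a : G // a ^ n = 1} = Nat.card T :=
          Nat.card_congr (Equiv.subtypeEquivRight (fun a => (hTmem a).symm))
        rw [hTcard]
        exact le_trans this (le_of_eq hnm.symm)
  classical
  have inst : Fintype G := Fintype.ofFinite G
  apply isCyclic_of_card_pow_eq_one_le
  intro n hn
  have hk := key n hn
  rw [Nat.card_eq_fintype_card, Fintype.card_subtype] at hk
  convert hk using 2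

lemma helper {G : Type*} [CommGroup G] [Finite G] (x y : G) (hxy : x ≠ y)
    (h : closedNbhd x = closedNbhd y) (hm : x ∈ Subgroup.zpowers y) :
    Subgroup.zpowers x = Subgroup.zpowers y ∨
    (IsCyclic G ∧ Subgroup.zpowers y = ⊤ ∧ x = 1) ∨
    (IsCyclic G ∧ ∃ p n : ℕ, p.Prime ∧ Nat.card G = p ^ n) := by
  have hN : ∀ z : G, (z = x ∨ z ∈ zpowers x ∨ x ∈ zpowers z) ↔
      (z = y ∨ z ∈ zpowers y ∨ y ∈ zpowers z) := by
    intro z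
    rw [← mem_closedNbhd_iff, ← mem_closedNbhd_iff, h]
  by_cases heq : zpowers x = zpowers y
  · exact Or.inl heq
  have hZxy : zpowers x ≤ zpowers y := zpowers_le.2 hm
  have hrs : orderOf x ∣ orderOf y := by
    have := Subgroup.orderOf_dvd_natCard _ hm
    rwa [Nat.card_zpowers] at this
  have hlt : orderOf x < orderOf y := by
    rcases lt_or_eq_of_le (Nat.le_of_dvd (orderOf_pos y) hrs) with h1 | h1
    · exact h1
    · exfalso
      apply heq
      apply Subgroup.eq_of_le_of_card_ge hZxy
      rw [Nat.card_zpowers, Nat.card_zpowers, h1]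
  have hy1 : y ≠ 1 := by
    rintro rfl
    rw [Subgroup.zpowers_one_eq_bot, Subgroup.mem_bot] at hm
    exact hxy (hm.trans rfl.symm ▸ rfl)
  have hs1 : 1 < orderOf y := by
    have := orderOf_pos y
    rcases Nat.lt_or_ge 1 (orderOf y) with h1 | h1
    · exact h1
    · exfalso; exact hy1 (orderOf_eq_one_iff.1 (by omega))
  have hflip : ∀ a : G, y ∈ zpowers a → orderOf a ∣ orderOf y → a ∈ zpowers y := by
    intro a hya hdvd
    have h1 : zpowers y ≤ zpowers a := zpowers_le.2 hya
    have heq2 : zpowers y = zpowers a := by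
      apply Subgroup.eq_of_le_of_card_ge h1
      rw [Nat.card_zpowers, Nat.card_zpowers]
      exact Nat.le_of_dvd (orderOf_pos y) hdvd
    rw [heq2]
    exact mem_zpowers a
  by_cases hx1 : x = 1
  · -- x = 1 : everything is in N[x]
    have hAll : ∀ z : G, z = y ∨ z ∈ zpowers y ∨ y ∈ zpowers z := by
      intro z
      exact (hN z).1 (Or.inr (Or.inr (hx1 ▸ Subgroup.one_mem _)))
    by_cases hpp : IsPrimePow (orderOf y)
    · obtain ⟨q, k, hq, hk0, hs⟩ := hpp
      have hq' : q.Prime := hq.nat_prime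
      have hnoq : ∀ a : G, ∀ l : ℕ, l.Prime → orderOf a = l → l = q := by
        intro a l hl ha
        rcases hAll a with h1 | h1 | h1
        · rw [h1] at ha
          have hd : q ∣ l := by rw [← ha, ← hs]; exact dvd_pow_self q (by omega)
          exact ((Nat.prime_dvd_prime_iff_eq hq' hl).1 hd).symm
        · have hd : l ∣ q ^ k := by
            rw [hs, ← ha]; exact orderOf_dvd_of_mem_zpowers h1
          exact (Nat.prime_dvd_prime_iff_eq hl hq').1 (hl.dvd_of_dvd_pow hd)
        · have hd : orderOf y ∣ l := ha ▸ orderOf_dvd_of_mem_zpowers h1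
          have hd2 : q ∣ l :=
            dvd_trans (by rw [← hs]; exact dvd_pow_self q (by omega)) hd
          exact ((Nat.prime_dvd_prime_iff_eq hq' hl).1 hd2).symm
      have hTq : ∀ a : G, a ^ q = 1 → a ∈ zpowers y := by
        intro a ha
        by_cases ha1 : a = 1
        · rw [ha1]; exact Subgroup.one_mem _
        haveI := Fact.mk hq'
        have horda : orderOf a = q := orderOf_eq_prime ha ha1
        rcases hAll a with h1 | h1 | h1
        · rw [h1]; exact mem_zpowers y
        · exact h1
        · refine hflip a h1 ?_
          rw [horda, ← hs]
          exact dvd_pow_self q (by omega)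
      have hcyc : IsCyclic G := lemA (fun p hp => by
        by_cases hpq : p = q
        · subst hpq; exact cardTorsionLe y hp.pos hTq
        · exact cardTorsionTrivial hp (fun a ha => hpq (hnoq a p hp ha)))
      have hcard : ∀ l : ℕ, l.Prime → l ∣ Nat.card G → l = q := by
        intro l hl hdvd
        haveI : Fintype G := Fintype.ofFinite G
        haveI := Fact.mk hl
        rw [Nat.card_eq_fintype_card] at hdvd
        obtain ⟨a, ha⟩ := exists_prime_orderOf_dvd_card l hdvd
        exact hnoq a l hl ha
      refine Or.inr (Or.inr ⟨hcyc, q, (Nat.card G).primeFactorsList.length, hq', ?_⟩)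
      exact Nat.eq_prime_pow_of_unique_prime_dvd Nat.card_pos.ne'
        (fun {d} hd hdn => hcard d hd hdn)
    · -- orderOf y is not a prime power
      have hmem : ∀ g : G, IsPrimePow (orderOf g) → g ∈ zpowers y := by
        intro g hg
        rcases hAll g with h1 | h1 | h1
        · rw [h1]; exact mem_zpowers y
        · exact h1
        · exfalso
          obtain ⟨l, j, hl, hj, hlj⟩ := hg
          have hsd : orderOf y ∣ l ^ j := hlj ▸ orderOf_dvd_of_mem_zpowers h1
          obtain ⟨i, hi, hsi⟩ := (Nat.dvd_prime_pow hl.nat_prime).1 hsd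
          have hi0 : i ≠ 0 := by rintro rfl; rw [pow_zero] at hsi; omega
          exact hpp ⟨l, i, hl, Nat.pos_of_ne_zero hi0, hsi.symm⟩
      have htop : zpowers y = ⊤ := by
        rw [Subgroup.eq_top_iff']
        exact mem_of_forall_primePow hmem
      have hcyc : IsCyclic G := ⟨⟨y, fun z => (Subgroup.eq_top_iff' _).1 htop z⟩⟩
      exact Or.inr (Or.inl ⟨hcyc, htop, hx1⟩)
  · -- x ≠ 1
    have hr1 : 1 < orderOf x := by
      have := orderOf_pos x
      rcases Nat.lt_or_ge 1 (orderOf x) with h1 | h1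
      · exact h1
      · exact absurd (orderOf_eq_one_iff.1 (by omega)) hx1
    have hs0 : orderOf y ≠ 0 := (orderOf_pos y).ne'
    have hr0 : orderOf x ≠ 0 := (orderOf_pos x).ne'
    have hcmp : ∀ l : ℕ, l.Prime → l ∣ orderOf y → ¬ IsPrimePow (orderOf y) →
        l ^ (orderOf y).factorization l ∣ orderOf x ∨
        orderOf x ∣ l ^ (orderOf y).factorization l := by
      intro l hl hld hpp
      have hdd : l ^ (orderOf y).factorization l ∣ orderOf y := Nat.ordProj_dvd _ _
      have hv1 : 1 ≤ (orderOf y).factorization l := hl.factorization_pos_of_dvd hs0 hld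
      have hds : l ^ (orderOf y).factorization l ≠ orderOf y := by
        intro h0
        exact hpp ⟨l, _, hl.prime, hv1, h0⟩
      set d := l ^ (orderOf y).factorization l with hd
      set z := y ^ (orderOf y / d) with hz
      have hordz : orderOf z = d := by
        have hd0 : 0 < d := pow_pos hl.pos _
        have hne : orderOf y / d ≠ 0 := by
          have h2 := Nat.le_of_dvd (orderOf_pos y) hdd
          have := Nat.div_pos h2 hd0
          omega
        rw [hz, orderOf_pow' y hne, Nat.gcd_eq_right (Nat.div_dvd_of_dvd hdd),
          Nat.div_div_self hdd hs0]
      have hzy : z ∈ zpowers y := hz ▸ Subgroup.pow_mem _ (mem_zpowers y) _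
      rcases (hN z).2 (Or.inr (Or.inl hzy)) with h1 | h1 | h1
      · left; rw [← hordz, h1]
      · left; rw [← hordz]; exact orderOf_dvd_of_mem_zpowers h1
      · right; rw [← hordz]; exact orderOf_dvd_of_mem_zpowers h1
    have hsp : IsPrimePow (orderOf y) := by
      by_contra hnp
      by_cases hall : ∀ l : ℕ, l.Prime → l ∣ orderOf y →
          l ^ (orderOf y).factorization l ∣ orderOf x
      · have hdvd : orderOf y ∣ orderOf x := by
          rw [← Nat.factorization_le_iff_dvd hs0 hr0]
          intro l
          by_cases hl : l.Prime
          · by_cases hld : l ∣ orderOf y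
            · exact (hl.pow_dvd_iff_le_factorization hr0).1 (hall l hl hld)
            · simp [Nat.factorization_eq_zero_of_not_dvd hld]
          · simp [Nat.factorization_eq_zero_of_not_prime _ hl]
        exact absurd (Nat.le_of_dvd (orderOf_pos x) hdvd) (by omega)
      · push_neg at hall
        obtain ⟨l, hl, hld, hnd⟩ := hall
        have hrd : orderOf x ∣ l ^ (orderOf y).factorization l := by
          rcases hcmp l hl hld hnp with h1 | h1
          · exact absurd h1 hnd
          · exact h1
        obtain ⟨i, hi, hri⟩ := (Nat.dvd_prime_pow hl).1 hrd
        have hi0 : i ≠ 0 := by rintro rfl; rw [pow_zero] at hri; omega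
        have hex : ∃ l' : ℕ, l'.Prime ∧ l' ∣ orderOf y ∧ l' ≠ l := by
          by_contra hno
          push_neg at hno
          have hlen := Nat.eq_prime_pow_of_unique_prime_dvd hs0
            (fun {d} hd hdn => hno d hd hdn)
          have hL : (orderOf y).primeFactorsList.length ≠ 0 := by
            rintro h0; rw [h0, pow_zero] at hlen; omega
          exact hnp ⟨l, _, hl.prime, Nat.pos_of_ne_zero hL, hlen.symm⟩
        obtain ⟨l', hl', hl'd, hl'l⟩ := hex
        rcases hcmp l' hl' hl'd hnp with h1 | h1
        · have hv'1 : 1 ≤ (orderOf y).factorization l' :=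
            hl'.factorization_pos_of_dvd hs0 hl'd
          have hd2 : l' ∣ orderOf x := dvd_trans (dvd_pow_self l' (by omega)) h1
          rw [hri] at hd2
          exact hl'l ((Nat.prime_dvd_prime_iff_eq hl' hl).1 (hl'.dvd_of_dvd_pow hd2))
        · have hd2 : l ∣ l' ^ (orderOf y).factorization l' :=
            dvd_trans (by rw [hri]; exact dvd_pow_self l (by omega)) h1
          exact hl'l.symm ((Nat.prime_dvd_prime_iff_eq hl hl').1 (hl.dvd_of_dvd_pow hd2))
    obtain ⟨p, k, hpprime, hk0, hs⟩ := hsp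
    have hp' : p.Prime := hpprime.nat_prime
    obtain ⟨i, hik, hri⟩ := (Nat.dvd_prime_pow hp').1 (hs ▸ hrs)
    have hi0 : i ≠ 0 := by rintro rfl; rw [pow_zero] at hri; omega
    have hik' : i < k := by
      rcases Nat.lt_or_ge i k with h1 | h1
      · exact h1
      · have h2 : orderOf y ≤ orderOf x := by
          rw [hri, ← hs]; exact Nat.pow_le_pow_right hp'.pos h1
        omega
    -- Step B : no elements of prime order ≠ p
    have hnoq : ∀ l : ℕ, l.Prime → l ≠ p → ∀ w : G, orderOf w ≠ l := by
      intro l hl hlp w hw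
      have hcp : Nat.Coprime p l := (Nat.coprime_primes hp' hl).2 (fun h0 => hlp h0.symm)
      have hco : Nat.Coprime (orderOf x) (orderOf w) := by
        rw [hri, hw]; exact hcp.pow_left i
      have hgord : orderOf (x * w) = orderOf x * l := by
        rw [← hw]
        exact (Commute.all x w).orderOf_mul_eq_mul_orderOf_of_coprime hco
      obtain ⟨c, -, hc⟩ := Nat.exists_mul_mod_eq_one_of_coprime
        (by rw [hri] at hco ⊢; rw [hw] at hco; exact (hcp.pow_left i).symm) hr1
      have h1 : (x * w) ^ l = x ^ l := by
        rw [mul_pow, ← hw, pow_orderOf_eq_one, mul_one]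
      have h2 : ((x * w) ^ l) ^ c = x := by
        rw [h1, ← pow_mul, ← pow_mod_orderOf, hc, pow_one]
      have hxg : x ∈ zpowers (x * w) := by
        have h6 : (x * w) ^ (l * c) ∈ zpowers (x * w) :=
          Subgroup.pow_mem _ (mem_zpowers (x * w)) (l * c)
        rwa [pow_mul, h2] at h6
      rcases (hN (x * w)).1 (Or.inr (Or.inr hxg)) with h3 | h3 | h3
      · apply hlp
        have h4 : orderOf x * l = p ^ k := by rw [← hgord, h3, ← hs]
        have h5 : l ∣ p ^ k := by rw [← h4]; exact dvd_mul_left l _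
        exact (Nat.prime_dvd_prime_iff_eq hl hp').1 (hl.dvd_of_dvd_pow h5)
      · apply hlp
        have h4 : orderOf x * l ∣ p ^ k := by
          rw [← hgord, hs]; exact orderOf_dvd_of_mem_zpowers h3
        exact (Nat.prime_dvd_prime_iff_eq hl hp').1
          (hl.dvd_of_dvd_pow (dvd_trans (dvd_mul_left l _) h4))
      · have h4 : p ^ k ∣ p ^ i * l := by
          have h5 := orderOf_dvd_of_mem_zpowers h3
          rw [hgord, hri, ← hs] at h5
          exact h5
        have h5 : p ^ k ∣ p ^ i := (hcp.pow_left k).dvd_of_dvd_mul_right h4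
        have h6 := (Nat.pow_dvd_pow_iff_le_right hp'.one_lt).1 h5
        omega
    -- Step C : p-torsion is contained in zpowers y
    have hTp : ∀ a : G, a ^ p = 1 → a ∈ zpowers y := by
      intro a ha
      by_cases ha1 : a = 1
      · rw [ha1]; exact Subgroup.one_mem _
      haveI := Fact.mk hp'
      have horda : orderOf a = p := orderOf_eq_prime ha ha1
      by_contra hw
      obtain ⟨m, hm0, hxm⟩ := (rel_iff x y).2 hm
      have hordm : orderOf x = orderOf y / (orderOf y).gcd m := by
        rw [hxm]; exact orderOf_pow' y hm0.ne'
      have hgdvd : (orderOf y).gcd m ∣ orderOf y := Nat.gcd_dvd_left _ _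
      have hgcd : (orderOf y).gcd m = orderOf y / orderOf x := by
        rw [hordm, Nat.div_div_self hgdvd hs0]
      have hpm : p ∣ m := by
        have h1 : orderOf y / orderOf x = p ^ (k - i) := by
          rw [← hs, hri, Nat.pow_div hik'.le hp'.pos]
        have h2 : p ∣ (orderOf y).gcd m := by
          rw [hgcd, h1]; exact dvd_pow_self p (by omega)
        exact h2.trans (Nat.gcd_dvd_right _ _)
      obtain ⟨m', rfl⟩ := hpm
      have htp : (y ^ m') ^ p = x := by
        rw [← pow_mul, mul_comm m' p]; exact hxm.symm
      have hgp : (y ^ m' * a) ^ p = x := by rw [mul_pow, htp, ha, mul_one]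
      have hxg : x ∈ zpowers (y ^ m' * a) := by
        rw [← hgp]; exact Subgroup.pow_mem _ (mem_zpowers _) p
      have htZy : y ^ m' ∈ zpowers y := Subgroup.pow_mem _ (mem_zpowers y) m'
      have hane : ∀ u : G, u ∈ zpowers y → y ^ m' * a ≠ u := by
        intro u hu h0
        apply hw
        have h5 : a = (y ^ m')⁻¹ * u := by rw [← h0]; group
        rw [h5]
        exact Subgroup.mul_mem _ (Subgroup.inv_mem _ htZy) hu
      rcases (hN (y ^ m' * a)).1 (Or.inr (Or.inr hxg)) with h1 | h1 | h1
      · exact hane y (mem_zpowers y) h1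
      · exact hane _ h1 rfl
      · have hgord : orderOf (y ^ m' * a) ∣ p ^ (i + 1) := by
          apply orderOf_dvd_of_pow_eq_one
          rw [pow_succ', pow_mul, hgp, ← hri, pow_orderOf_eq_one]
        have hsd : orderOf y ∣ orderOf (y ^ m' * a) := orderOf_dvd_of_mem_zpowers h1
        have hk1 : p ^ k ∣ p ^ (i + 1) := dvd_trans (hs ▸ hsd) hgord
        have hki : k ≤ i + 1 := (Nat.pow_dvd_pow_iff_le_right hp'.one_lt).1 hk1
        have hdord : orderOf (y ^ m' * a) ∣ orderOf y := by
          rw [← hs]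
          exact dvd_trans hgord (pow_dvd_pow p (by omega))
        exact hane _ (hflip _ h1 hdord) rfl
    -- conclusion
    have hcyc : IsCyclic G := lemA (fun q hq => by
      by_cases hqp : q = p
      · subst hqp; exact cardTorsionLe y hq.pos hTp
      · exact cardTorsionTrivial hq (hnoq q hq hqp))
    have hcard : ∀ l : ℕ, l.Prime → l ∣ Nat.card G → l = p := by
      intro l hl hdvd
      haveI : Fintype G := Fintype.ofFinite G
      haveI := Fact.mk hl
      rw [Nat.card_eq_fintype_card] at hdvd
      obtain ⟨a, ha⟩ := exists_prime_orderOf_dvd_card l hdvd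
      by_contra hlp
      exact hnoq l hl hlp a ha
    refine Or.inr (Or.inr ⟨hcyc, p, (Nat.card G).primeFactorsList.length, hp', ?_⟩)
    exact Nat.eq_prime_pow_of_unique_prime_dvd Nat.card_pos.ne'
      (fun {d} hd hdn => hcard d hd hdn)

theorem abelian_closedNbhd_eq_classification {G : Type*} [CommGroup G]
    [Finite G] (x y : G) (hxy : x ≠ y) (h : closedNbhd x = closedNbhd y) :
    Subgroup.zpowers x = Subgroup.zpowers y ∨
      (IsCyclic G ∧ ((Subgroup.zpowers x = ⊤ ∧ y = 1) ∨
        (Subgroup.zpowers y = ⊤ ∧ x = 1))) ∨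
      (IsCyclic G ∧ ∃ p n : ℕ, p.Prime ∧ Nat.card G = p ^ n) := by
  have hx : x ∈ closedNbhd y := by rw [← h]; exact Set.mem_insert x _
  rcases (mem_closedNbhd_iff y x).1 hx with h1 | h1 | h1
  · exact absurd h1 hxy
  · rcases helper x y hxy h h1 with ha | ⟨hc, ht, hx1⟩ | hc
    · exact Or.inl ha
    · exact Or.inr (Or.inl ⟨hc, Or.inr ⟨ht, hx1⟩⟩)
    · exact Or.inr (Or.inr hc)
  · rcases helper y x hxy.symm h.symm h1 with ha | ⟨hc, ht, hy1⟩ | hc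
    · exact Or.inl ha.symm
    · exact Or.inr (Or.inl ⟨hc, Or.inl ⟨ht, hy1⟩⟩)
    · exact Or.inr (Or.inr hc)
end

section
/- Let G be a finite group and let C be an equivalence class of the closed-neighbourhood relation on the power graph of G, different from the class of the identity. Then either C is a single ⋄-class (all elements of C generate the same cyclic subgroup pairwise, i.e. C is an equivalence class of the relation ⟨a⟩=⟨b⟩), or there exist a prime p, an integer r ≥ 2, an element y ∈ C with o(y) = p^r, and an integer s with 0 ≤ s ≤ r−2 such that C = {z ∈ ⟨y⟩ : p^{s+1} ≤ o(z) ≤ p^r}. -/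
open Subgroup

section Aux

variable {G : Type*} [Group G] [Finite G]

lemma exists_pos_pow_eq {a b : G} (h : a ∈ zpowers b) : ∃ m : ℕ, 0 < m ∧ a = b ^ m := by
  obtain ⟨m, hm⟩ := mem_powers_iff_mem_zpowers.mpr h
  refine ⟨m + orderOf b, ?_, ?_⟩
  · have := orderOf_pos b; omega
  · have hm' : b ^ m = a := hm
    rw [pow_add, pow_orderOf_eq_one, mul_one, hm']

lemma mem_closedNbhd {x z : G} :
    z ∈ closedNbhd x ↔ x ∈ zpowers z ∨ z ∈ zpowers x := by
  constructor
  · intro h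
    rcases h with rfl | hadj
    · exact Or.inr (mem_zpowers _)
    · rw [SimpleGraph.mem_neighborSet, powerGraph, SimpleGraph.fromRel_adj] at hadj
      rcases hadj.2 with ⟨m, _, he⟩ | ⟨m, _, he⟩
      · exact Or.inl ⟨(m : ℤ), by simpa using he.symm⟩
      · exact Or.inr ⟨(m : ℤ), by simpa using he.symm⟩
  · intro h
    by_cases hzx : z = x
    · exact Or.inl hzx
    · right
      rw [SimpleGraph.mem_neighborSet, powerGraph, SimpleGraph.fromRel_adj]
      refine ⟨fun he => hzx he.symm, ?_⟩
      rcases h with h | h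
      · exact Or.inl (exists_pos_pow_eq h)
      · exact Or.inr (exists_pos_pow_eq h)

lemma closedNbhd_one_eq : closedNbhd (1 : G) = Set.univ :=
  Set.eq_univ_of_forall fun z => mem_closedNbhd.mpr (Or.inl (one_mem _))

lemma closedNbhd_congr {a b : G} (h : zpowers a = zpowers b) :
    closedNbhd a = closedNbhd b := by
  ext z
  rw [mem_closedNbhd, mem_closedNbhd, ← zpowers_le, ← zpowers_le (g := b), h]

lemma isCyclic_zpowers_s16 (y : G) : IsCyclic (zpowers y) := by
  refine ⟨⟨y, mem_zpowers y⟩, fun x => ?_⟩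
  obtain ⟨k, hk⟩ := mem_zpowers_iff.mp x.2
  exact mem_zpowers_iff.mpr ⟨k, Subtype.ext (by simpa using hk)⟩

lemma mem_zpowers_of_orderOf_dvd {y a b : G} (ha : a ∈ zpowers y) (hb : b ∈ zpowers y)
    (h : orderOf a ∣ orderOf b) : a ∈ zpowers b := by
  classical
  haveI : Fintype (zpowers y) := Fintype.ofFinite _
  haveI : IsCyclic (zpowers y) := _root_.isCyclic_zpowers_s16 y
  set H := zpowers y
  set a' : H := ⟨a, ha⟩ with ha'
  set b' : H := ⟨b, hb⟩ with hb'
  have hoa : orderOf a' = orderOf a := Subgroup.orderOf_mk a ha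
  have hob : orderOf b' = orderOf b := Subgroup.orderOf_mk b hb
  have hb0 : 0 < orderOf b' := orderOf_pos b'
  have hle := IsCyclic.card_pow_eq_one_le (α := H) hb0
  have h1 : (zpowers b' : Set H).toFinset ⊆
      Finset.univ.filter (fun c : H => c ^ orderOf b' = 1) := by
    intro c hc
    simp only [Set.mem_toFinset, SetLike.mem_coe] at hc
    simp only [Finset.mem_filter, Finset.mem_univ, true_and]
    exact orderOf_dvd_iff_pow_eq_one.mp (orderOf_dvd_of_mem_zpowers hc)
  have hcard : (zpowers b' : Set H).toFinset.card = orderOf b' := by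
    rw [Set.toFinset_card, ← Nat.card_eq_fintype_card]
    exact Nat.card_zpowers b'
  have h2 : (Finset.univ.filter (fun c : H => c ^ orderOf b' = 1)).card ≤
      (zpowers b' : Set H).toFinset.card := by
    rw [hcard]
    exact le_trans (le_of_eq (by congr 1)) hle
  have heq := Finset.eq_of_subset_of_card_le h1 h2
  have ha'mem : a' ∈ Finset.univ.filter (fun c : H => c ^ orderOf b' = 1) := by
    simp only [Finset.mem_filter, Finset.mem_univ, true_and]
    exact orderOf_dvd_iff_pow_eq_one.mp (by rw [hoa, hob]; exact h)
  rw [← heq, Set.mem_toFinset, SetLike.mem_coe] at ha'mem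
  obtain ⟨k, hk⟩ := mem_zpowers_iff.mp ha'mem
  exact mem_zpowers_iff.mpr ⟨k, by simpa [ha', hb'] using congrArg (Subtype.val) hk⟩

lemma zpowers_eq_of_orderOf_eq {a b : G} (hb : b ∈ zpowers a) (h : orderOf a = orderOf b) :
    zpowers b = zpowers a :=
  Subgroup.eq_of_le_of_card_ge (zpowers_le.mpr hb)
    (by rw [Nat.card_zpowers, Nat.card_zpowers, h])

lemma exists_mem_zpowers_orderOf_eq {x : G} {c : ℕ} (hc : c ∣ orderOf x) :
    ∃ u ∈ zpowers x, orderOf u = c := by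
  refine ⟨x ^ (orderOf x / c), Subgroup.pow_mem _ (mem_zpowers x) _, ?_⟩
  rw [orderOf_pow, Nat.gcd_eq_right (Nat.div_dvd_of_dvd hc),
    Nat.div_div_self hc (orderOf_pos x).ne']

lemma pair_lemma {x y : G} (hN : closedNbhd x = closedNbhd y) (hy : y ∈ zpowers x)
    (hne : zpowers y ≠ zpowers x) (hy1 : y ≠ 1) :
    ∃ p r t : ℕ, p.Prime ∧ 2 ≤ r ∧ orderOf x = p ^ r ∧ 1 ≤ t ∧ t < r ∧ orderOf y = p ^ t := by
  set n := orderOf x with hn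
  set d := orderOf y with hd
  have hn0 : 0 < n := orderOf_pos x
  have hd0 : 0 < d := orderOf_pos y
  have hd_dvd : d ∣ n := orderOf_dvd_of_mem_zpowers hy
  have hd1 : d ≠ 1 := by simpa [hd, orderOf_eq_one_iff] using hy1
  have hdn : d ≠ n := fun h => hne (zpowers_eq_of_orderOf_eq hy h.symm)
  -- comparability of divisors of n with d
  have hcomp : ∀ c, c ∣ n → c ∣ d ∨ d ∣ c := by
    intro c hc
    obtain ⟨u, hu_mem, hu_ord⟩ := exists_mem_zpowers_orderOf_eq hc
    have h1 : u ∈ closedNbhd x := mem_closedNbhd.mpr (Or.inr hu_mem)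
    rw [hN] at h1
    rcases mem_closedNbhd.mp h1 with h | h
    · exact Or.inr (hu_ord ▸ orderOf_dvd_of_mem_zpowers h)
    · exact Or.inl (hu_ord ▸ orderOf_dvd_of_mem_zpowers h)
  -- find prime p with v_p(d) < v_p(n)
  have hnd : ¬ n ∣ d := fun h => hdn (Nat.dvd_antisymm hd_dvd h)
  have hfac : ¬ n.factorization ≤ d.factorization := by
    rwa [Nat.factorization_le_iff_dvd hn0.ne' hd0.ne']
  rw [Finsupp.le_def] at hfac
  push_neg at hfac
  obtain ⟨p, hplt⟩ := hfac
  have hp : p.Prime := by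
    have : p ∈ n.factorization.support := by
      rw [Finsupp.mem_support_iff]; omega
    rw [Nat.support_factorization] at this
    exact Nat.prime_of_mem_primeFactors this
  -- n is a power of p
  have hallp : ∀ q : ℕ, q.Prime → q ∣ n → q = p := by
    by_contra hall
    push_neg at hall
    obtain ⟨q, hq, hqn, hqp⟩ := hall
    by_cases hqd : q ∣ d
    · rcases hcomp (p ^ n.factorization p) (Nat.ordProj_dvd n p) with h | h
      · have : n.factorization p ≤ d.factorization p :=
          (Nat.Prime.pow_dvd_iff_le_factorization hp hd0.ne').mp h
        omega
      · exact hqp ((Nat.prime_dvd_prime_iff_eq hq hp).mp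
          (hq.dvd_of_dvd_pow (dvd_trans hqd h)))
    · have hq1 : 1 ≤ n.factorization q := by
        rw [← hq.pow_dvd_iff_le_factorization hn0.ne', pow_one]; exact hqn
      rcases hcomp (q ^ n.factorization q) (Nat.ordProj_dvd n q) with h | h
      · exact hqd (dvd_trans (dvd_pow_self q (by omega)) h)
      · obtain ⟨i, hi, hdi⟩ := (Nat.dvd_prime_pow hq).mp h
        have hi0 : i ≠ 0 := fun h0 => hd1 (by simpa [h0] using hdi)
        exact hqd (hdi ▸ dvd_pow_self q hi0)
  have hn1 : n ≠ 1 := fun h => hd1 (Nat.eq_one_of_dvd_one (h ▸ hd_dvd))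
  have hneq : n = p ^ n.primeFactorsList.length :=
    Nat.eq_prime_pow_of_unique_prime_dvd hn0.ne' (fun hq hdvd => hallp _ hq hdvd)
  set r := n.primeFactorsList.length with hr
  have hr0 : r ≠ 0 := fun h => hn1 (by rw [hneq, h, pow_zero])
  -- d = p ^ t
  obtain ⟨t, htr, hdt⟩ := (Nat.dvd_prime_pow hp).mp (hneq ▸ hd_dvd)
  have ht0 : t ≠ 0 := fun h => hd1 (by simpa [h] using hdt)
  have htlt : t < r := by
    rcases Nat.lt_or_ge t r with h | h
    · exact h
    · exact absurd (by rw [hdt, hneq]; congr 1; omega) hdn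
  exact ⟨p, r, t, hp, by omega, hneq, by omega, htlt, hdt⟩

lemma sandwich {p r : ℕ} (hp : p.Prime) {y u v w : G} (hy : orderOf y = p ^ r)
    (hu : u ∈ zpowers y) (hv : v ∈ zpowers y) (hw : w ∈ zpowers y)
    (hN : closedNbhd u = closedNbhd v) (h1 : orderOf u ∣ orderOf w)
    (h2 : orderOf w ∣ orderOf v) : closedNbhd w = closedNbhd u := by
  have comp : ∀ a b : G, a ∈ zpowers y → b ∈ zpowers y →
      a ∈ zpowers b ∨ b ∈ zpowers a := by
    intro a b ha hb
    obtain ⟨i, _, hia⟩ := (Nat.dvd_prime_pow hp).mp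
      (hy ▸ orderOf_dvd_of_mem_zpowers ha)
    obtain ⟨j, _, hjb⟩ := (Nat.dvd_prime_pow hp).mp
      (hy ▸ orderOf_dvd_of_mem_zpowers hb)
    rcases le_total i j with h | h
    · exact Or.inl (mem_zpowers_of_orderOf_dvd ha hb
        (by rw [hia, hjb]; exact pow_dvd_pow p h))
    · exact Or.inr (mem_zpowers_of_orderOf_dvd hb ha
        (by rw [hia, hjb]; exact pow_dvd_pow p h))
  have huw : u ∈ zpowers w := mem_zpowers_of_orderOf_dvd hu hw h1
  have hwv : w ∈ zpowers v := mem_zpowers_of_orderOf_dvd hw hv h2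
  apply Set.Subset.antisymm
  · intro z hz
    rcases mem_closedNbhd.mp hz with h | h
    · exact mem_closedNbhd.mpr (Or.inl (zpowers_le.mpr h huw))
    · have hzy : z ∈ zpowers y := zpowers_le.mpr hw h
      rcases comp z u hzy hu with h' | h'
      · exact mem_closedNbhd.mpr (Or.inr h')
      · exact mem_closedNbhd.mpr (Or.inl h')
  · intro z hz
    rcases mem_closedNbhd.mp (hN ▸ hz) with h | h
    · exact mem_closedNbhd.mpr (Or.inl (zpowers_le.mpr h hwv))
    · have hzy : z ∈ zpowers y := zpowers_le.mpr hv h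
      rcases comp z w hzy hw with h' | h'
      · exact mem_closedNbhd.mpr (Or.inr h')
      · exact mem_closedNbhd.mpr (Or.inl h')

end Aux

theorem Nclass_classification {G : Type*} [Group G] [Finite G] (x : G)
    (C : Set G) (hC : C = {z : G | closedNbhd z = closedNbhd x})
    (hstar : closedNbhd x ≠ closedNbhd (1 : G)) :
    (∃ a : G, C = {z : G | Subgroup.zpowers z = Subgroup.zpowers a}) ∨
      (∃ (p r s : ℕ) (y : G), p.Prime ∧ 2 ≤ r ∧ y ∈ C ∧ orderOf y = p ^ r ∧
        s ≤ r - 2 ∧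
        C = {z : G | z ∈ Subgroup.zpowers y ∧
          p ^ (s + 1) ≤ orderOf z ∧ orderOf z ≤ p ^ r}) := by
  subst hC
  have hx_mem : x ∈ {z : G | closedNbhd z = closedNbhd x} := rfl
  set C := {z : G | closedNbhd z = closedNbhd x} with hCdef
  by_cases hdiamond : ∀ z ∈ C, zpowers z = zpowers x
  · left
    refine ⟨x, Set.Subset.antisymm (fun z hz => hdiamond z hz) (fun z hz => ?_)⟩
    exact closedNbhd_congr hz
  · right
    push_neg at hdiamond
    obtain ⟨z0, hz0C, hz0ne⟩ := hdiamond
    have hCfin : C.Finite := Set.toFinite C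
    have hCne : C.Nonempty := ⟨x, hx_mem⟩
    obtain ⟨y, hyC, hymax⟩ := Set.exists_max_image C orderOf hCfin hCne
    have h1notC : (1 : G) ∉ C := fun h => hstar (Set.mem_setOf_eq ▸ h).symm
    have hsub : ∀ z ∈ C, z ∈ zpowers y := by
      intro z hz
      have hzy : z ∈ closedNbhd y := by
        have : z ∈ closedNbhd z := mem_closedNbhd.mpr (Or.inr (mem_zpowers z))
        rwa [show closedNbhd z = closedNbhd y from (hz : _ = _).trans (hyC : _ = _).symm] at this
      rcases mem_closedNbhd.mp hzy with h | h
      · have hord : orderOf z = orderOf y :=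
          le_antisymm (hymax z hz)
            (Nat.le_of_dvd (orderOf_pos z) (orderOf_dvd_of_mem_zpowers h))
        have heq := zpowers_eq_of_orderOf_eq h hord
        rw [heq]; exact mem_zpowers z
      · exact h
    have hz1 : ∃ z1 ∈ C, zpowers z1 ≠ zpowers y := by
      by_cases h : zpowers x = zpowers y
      · exact ⟨z0, hz0C, fun he => hz0ne (he.trans h.symm)⟩
      · exact ⟨x, hx_mem, fun he => h he⟩
    obtain ⟨z1, hz1C, hz1ne⟩ := hz1
    have hz1_1 : z1 ≠ 1 := fun h => h1notC (h ▸ hz1C)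
    have hNyz1 : closedNbhd y = closedNbhd z1 := (hyC : _ = _).trans (hz1C : _ = _).symm
    obtain ⟨p, r, t, hp, hr2, hyord, ht1, htr, hz1ord⟩ :=
      pair_lemma hNyz1 (hsub z1 hz1C) hz1ne hz1_1
    obtain ⟨w, hwC, hwmin⟩ := Set.exists_min_image C orderOf hCfin hCne
    have hwy := hsub w hwC
    obtain ⟨m, hm_le, hword⟩ := (Nat.dvd_prime_pow hp).mp
      (hyord ▸ orderOf_dvd_of_mem_zpowers hwy)
    have hm1 : 1 ≤ m := by
      rcases Nat.eq_zero_or_pos m with h | h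
      · exact absurd (orderOf_eq_one_iff.mp (by simpa [h] using hword) ▸ hwC) h1notC
      · exact h
    have hmt : m ≤ t := by
      have h := hwmin z1 hz1C
      rw [hword, hz1ord] at h
      exact (pow_le_pow_iff_right₀ hp.one_lt).mp h
    refine ⟨p, r, m - 1, y, hp, hr2, hyC, hyord, by omega, ?_⟩
    have hmm : m - 1 + 1 = m := by omega
    rw [hmm]
    ext z
    simp only [Set.mem_setOf_eq]
    constructor
    · intro hz
      refine ⟨hsub z hz, ?_, ?_⟩
      · exact hword ▸ hwmin z hz
      · exact Nat.le_of_dvd (pow_pos hp.pos r)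
          (hyord ▸ orderOf_dvd_of_mem_zpowers (hsub z hz))
    · rintro ⟨hzy, hlo, hhi⟩
      obtain ⟨k, hk, hzk⟩ := (Nat.dvd_prime_pow hp).mp
        (hyord ▸ orderOf_dvd_of_mem_zpowers hzy)
      have hmk : m ≤ k := by
        rw [hzk] at hlo
        exact (pow_le_pow_iff_right₀ hp.one_lt).mp hlo
      have hdvd1 : orderOf w ∣ orderOf z := by
        rw [hword, hzk]; exact pow_dvd_pow p hmk
      have hdvd2 : orderOf z ∣ orderOf y := orderOf_dvd_of_mem_zpowers hzy
      have hNwy : closedNbhd w = closedNbhd y := (hwC : _ = _).trans (hyC : _ = _).symm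
      have := sandwich hp hyord hwy (mem_zpowers y) hzy hNwy hdvd1 hdvd2
      exact (this.trans (hwC : _ = _) : _)
end

section
/- Let G be a finite cyclic group of order n ≥ 3. Then the power graph P(G) is hamiltonian, i.e., contains a cycle passing through every vertex exactly once. -/
lemma exists_pos_pow_eq_zpow {G : Type*} [Group G] [Finite G] (x : G) (k : ℤ) :
    ∃ m : ℕ, 0 < m ∧ x ^ m = x ^ k := by
  have ho : 0 < orderOf x := orderOf_pos x
  refine ⟨(k % (orderOf x : ℤ)).toNat + orderOf x, by positivity, ?_⟩
  have hnn : 0 ≤ k % (orderOf x : ℤ) :=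
    Int.emod_nonneg k (by exact_mod_cast ho.ne')
  calc x ^ ((k % (orderOf x : ℤ)).toNat + orderOf x)
      = x ^ (k % (orderOf x : ℤ)).toNat * x ^ orderOf x := pow_add x _ _
    _ = x ^ (k % (orderOf x : ℤ)).toNat := by rw [pow_orderOf_eq_one, mul_one]
    _ = x ^ (((k % (orderOf x : ℤ)).toNat : ℤ)) := (zpow_natCast x _).symm
    _ = x ^ (k % (orderOf x : ℤ)) := by rw [Int.toNat_of_nonneg hnn]
    _ = x ^ k := zpow_mod_orderOf x k

lemma pow_adj {G : Type*} [Group G] [Finite G] {g : G} {n : ℕ} (hn : orderOf g = n)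
    (h3 : 3 ≤ n) {r s : ℕ} (hr : r < n) (hs : s < n) (hrs : r ≠ s)
    (hd : Nat.gcd r n ∣ s) : (powerGraph G).Adj (g ^ r) (g ^ s) := by
  have hne : g ^ r ≠ g ^ s := fun hh => hrs (pow_injOn_Iio_orderOf (by simp [hn, hr]) (by simp [hn, hs]) hh)
  have hn0 : (0:ℕ) < n := by omega
  -- key : g ^ s is a positive power of g ^ r
  have key : ∃ m : ℕ, 0 < m ∧ (g ^ s) = (g ^ r) ^ m := by
    set d : ℕ := Nat.gcd r n with hdd
    have hd0 : 0 < d := Nat.gcd_pos_of_pos_right r hn0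
    have hgd : (g : G) ^ (d : ℤ) = (g ^ r) ^ (Nat.gcdA r n) := by
      have hb : (d : ℤ) = r * Nat.gcdA r n + n * Nat.gcdB r n := Nat.gcd_eq_gcd_ab r n
      have hgn : (g : G) ^ ((n : ℤ) * Nat.gcdB r n) = 1 := by
        rw [zpow_mul]
        have : (g : G) ^ (n : ℤ) = 1 := by
          rw [zpow_natCast, ← hn, pow_orderOf_eq_one]
        rw [this, one_zpow]
      rw [hb, zpow_add, hgn, mul_one, zpow_mul, zpow_natCast]
    have hgs : (g : G) ^ s = (g ^ r) ^ ((Nat.gcdA r n) * (s / d : ℕ)) := by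
      have : (s : ℤ) = (d : ℤ) * (s / d : ℕ) := by
        exact_mod_cast (Nat.mul_div_cancel' hd).symm
      calc (g : G) ^ s = g ^ (s : ℤ) := (zpow_natCast g s).symm
        _ = g ^ ((d : ℤ) * (s / d : ℕ)) := by rw [← this]
        _ = (g ^ (d : ℤ)) ^ ((s / d : ℕ) : ℤ) := by rw [← zpow_mul]
        _ = ((g ^ r) ^ (Nat.gcdA r n)) ^ ((s / d : ℕ) : ℤ) := by rw [hgd]
        _ = (g ^ r) ^ ((Nat.gcdA r n) * (s / d : ℕ)) := by rw [← zpow_mul]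
    obtain ⟨m, hm, hme⟩ := exists_pos_pow_eq_zpow (g ^ r) ((Nat.gcdA r n) * (s / d : ℕ))
    exact ⟨m, hm, by rw [hgs, ← hme]⟩
  obtain ⟨m, hm, hme⟩ := key
  exact ⟨hne, Or.inr ⟨m, hm, hme⟩⟩

lemma exists_pow_lt_eq {G : Type*} [Group G] [Finite G] {g : G} {n : ℕ} (hn : orderOf g = n)
    (hn0 : 0 < n) (hg : ∀ x : G, x ∈ Subgroup.zpowers g) (x : G) :
    ∃ r : ℕ, r < n ∧ g ^ r = x := by
  obtain ⟨k, hk⟩ := Subgroup.mem_zpowers_iff.mp (hg x)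
  refine ⟨(k % (n : ℤ)).toNat, ?_, ?_⟩
  · have h1 : k % (n : ℤ) < n := Int.emod_lt_of_pos k (by exact_mod_cast hn0)
    omega
  · have hnn : 0 ≤ k % (n : ℤ) := Int.emod_nonneg k (by exact_mod_cast hn0.ne')
    calc g ^ (k % (n:ℤ)).toNat = g ^ ((k % (n:ℤ)).toNat : ℤ) := (zpow_natCast g _).symm
      _ = g ^ (k % (n : ℤ)) := by rw [Int.toNat_of_nonneg hnn]
      _ = g ^ k := by rw [← hn]; exact zpow_mod_orderOf g k
      _ = x := hk

lemma chain'_and {α : Type*} {R S : α → α → Prop} :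
    ∀ {l : List α}, l.Chain' R → l.Chain' S → l.Chain' (fun a b => R a b ∧ S a b)
  | [], _, _ => List.IsChain.nil
  | [_], _, _ => List.isChain_singleton _
  | a :: b :: l, hR, hS => by
    simp only [List.Chain', List.isChain_cons_cons] at *
    exact ⟨⟨hR.1, hS.1⟩, chain'_and hR.2 hS.2⟩

lemma chain'_flatMap {α β : Type*} {R : β → β → Prop} {f : α → List β} :
    ∀ {l : List α}, (∀ a ∈ l, (f a).Chain' R) → (∀ a ∈ l, f a ≠ []) →
    l.Chain' (fun a b => ∀ x ∈ (f a).getLast?, ∀ y ∈ (f b).head?, R x y) →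
    (l.flatMap f).Chain' R
  | [], _, _, _ => by simp [List.Chain']
  | [a], hc, _, _ => by simpa using hc a (by simp)
  | a :: b :: l, hc, hne, hl => by
    simp only [List.Chain', List.isChain_cons_cons] at hl
    have ih := chain'_flatMap (l := b :: l) (fun x hx => hc x (by simp [hx]))
      (fun x hx => hne x (by simp [hx])) hl.2
    rw [show (a :: b :: l).flatMap f = f a ++ (b :: l).flatMap f by simp]
    simp only [List.Chain'] at ih ⊢
    rw [List.isChain_append]
    refine ⟨hc a (by simp), ih, ?_⟩
    intro x hx y hy
    refine hl.1 x hx y ?_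
    rw [show (b :: l).flatMap f = f b ++ l.flatMap f by simp, List.head?_append] at hy
    cases hfb : (f b).head? with
    | none => exact absurd (List.head?_eq_none_iff.mp hfb) (hne b (by simp))
    | some z =>
      rw [hfb] at hy
      exact hy

/-- Comparability by divisibility. -/
def DvdRel (a b : ℕ) : Prop := a ∣ b ∨ b ∣ a

lemma exists_divisor_chain : ∀ n : ℕ, 0 < n → ∃ L : List ℕ,
    L.head? = some 1 ∧ L.Nodup ∧ (∀ d, d ∈ L ↔ d ∣ n) ∧ L.Chain' DvdRel := by
  intro n
  induction n using Nat.strong_induction_on with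
  | _ n ih =>
  intro hn0
  rcases eq_or_lt_of_le (show 1 ≤ n from hn0) with h1 | h1
  · refine ⟨[1], rfl, by simp, ?_, by simp [List.Chain']⟩
    intro d; simp [← h1, Nat.dvd_one]
  · -- n ≥ 2
    have hne1 : n ≠ 1 := by omega
    set p := n.minFac with hp
    have hpp : p.Prime := Nat.minFac_prime hne1
    set a := n.factorization p with ha
    set m := n / p ^ a with hm
    have hmn : p ^ a * m = n := Nat.ordProj_mul_ordCompl_eq_self n p
    have hpm : ¬ p ∣ m := Nat.not_dvd_ordCompl hpp (by omega)
    have ha1 : 1 ≤ a := hpp.factorization_pos_of_dvd (by omega) (Nat.minFac_dvd n)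
    have hm0 : 0 < m := Nat.ordCompl_pos p (by omega)
    have hmlt : m < n := by
      have h2 : 1 < p ^ a := Nat.one_lt_pow (by omega) hpp.one_lt
      calc m = 1 * m := (one_mul m).symm
        _ < p ^ a * m := (Nat.mul_lt_mul_right hm0).mpr h2
        _ = n := hmn
    obtain ⟨L₀, hhead, hnd, hmem, hch⟩ := ih m hmlt hm0
    have hL₀ne : L₀ ≠ [] := by intro h; rw [h] at hhead; simp at hhead
    have hpos : ∀ e ∈ L₀, e ≠ 0 ∧ ¬ p ∣ e := by
      intro e he
      have hdvd : e ∣ m := (hmem e).mp he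
      exact ⟨(Nat.pos_of_dvd_of_pos hdvd hm0).ne', fun hpe => hpm (hpe.trans hdvd)⟩
    set f : ℕ → List ℕ := fun i => if Even i then L₀.map (· * p ^ i) else (L₀.map (· * p ^ i)).reverse with hf
    have hfne : ∀ i, f i ≠ [] := by
      intro i; simp only [hf]
      split <;> simp [hL₀ne]
    have hfmem : ∀ i x, x ∈ f i ↔ ∃ e ∈ L₀, x = e * p ^ i := by
      intro i x; simp only [hf]
      split <;> simp [eq_comm]
    -- factorization of elements of f i
    have hfact : ∀ i x, x ∈ f i → x.factorization p = i ∧ x ≠ 0 := by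
      intro i x hx
      obtain ⟨e, he, rfl⟩ := (hfmem i x).mp hx
      obtain ⟨he0, hpe⟩ := hpos e he
      have hpi : p ^ i ≠ 0 := (Nat.pow_pos (n := i) hpp.pos).ne'
      constructor
      · rw [Nat.factorization_mul he0 hpi]
        simp [Nat.factorization_eq_zero_of_not_dvd hpe, hpp.factorization_pow]
      · exact Nat.mul_ne_zero he0 hpi
    refine ⟨(List.range (a+1)).flatMap f, ?_, ?_, ?_, ?_⟩
    · -- head
      rw [List.range_succ_eq_map]
      rw [show ((0 : ℕ) :: (List.range a).map (·+1)).flatMap f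
          = f 0 ++ ((List.range a).map (·+1)).flatMap f by simp, List.head?_append]
      have hf0 : f 0 = L₀.map (· * 1) := by simp [hf]
      rw [hf0, List.head?_map, hhead]
      simp
    · -- nodup
      rw [List.nodup_flatMap]
      constructor
      · intro i _
        have hmap : (L₀.map (· * p ^ i)).Nodup := by
          refine hnd.map_on ?_
          intro x hx y hy hxy
          exact Nat.eq_of_mul_eq_mul_right (Nat.pow_pos (n := i) hpp.pos) hxy
        simp only [hf]; split
        · exact hmap
        · exact List.nodup_reverse.mpr hmap
      · have hlt : (List.range (a+1)).Pairwise (· < ·) := List.pairwise_lt_range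
        refine hlt.imp ?_
        intro i j hij x hxi hxj
        have h1 := hfact i x hxi
        have h2 := hfact j x hxj
        omega
    · -- membership
      intro d
      rw [List.mem_flatMap]
      constructor
      · rintro ⟨i, hi, hd⟩
        obtain ⟨e, he, rfl⟩ := (hfmem i d).mp hd
        have h1 : e ∣ m := (hmem e).mp he
        have h2 : p ^ i ∣ p ^ a := pow_dvd_pow p (Nat.lt_succ_iff.mp (List.mem_range.mp hi))
        calc e * p ^ i ∣ m * p ^ a := mul_dvd_mul h1 h2
          _ = n := by rw [mul_comm]; exact hmn
      · intro hdn
        have hd0 : d ≠ 0 := by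
          rintro rfl; rw [zero_dvd_iff] at hdn; omega
        set i := d.factorization p with hi
        set e := d / p ^ i with he
        have hde : p ^ i * e = d := Nat.ordProj_mul_ordCompl_eq_self d p
        have hpe : ¬ p ∣ e := Nat.not_dvd_ordCompl hpp hd0
        have hia : i ≤ a := by
          have := (Nat.factorization_le_iff_dvd hd0 (by omega)).mpr hdn
          exact this p
        have hem : e ∣ m := by
          have h1 : e ∣ p ^ a * m := hde ▸ (Dvd.intro_left _ rfl : e ∣ p ^ i * e) |>.trans (hmn ▸ hdn)
          have h2 : Nat.Coprime e (p ^ a) :=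
            Nat.Coprime.pow_right a ((hpp.coprime_iff_not_dvd.mpr hpe).symm)
          exact h2.dvd_of_dvd_mul_left h1
        refine ⟨i, List.mem_range.mpr (by omega), (hfmem i d).mpr ⟨e, (hmem e).mpr hem, ?_⟩⟩
        rw [mul_comm]; exact hde.symm
    · -- chain
      refine chain'_flatMap (fun i _ => ?_) (fun i _ => hfne i) ?_
      · have hmap : (L₀.map (· * p ^ i)).Chain' DvdRel := by
          simp only [List.Chain', List.isChain_map]
          exact hch.imp fun e e' h =>
            h.imp (fun hd => mul_dvd_mul_right hd _) (fun hd => mul_dvd_mul_right hd _)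
        simp only [hf]; split
        · exact hmap
        · exact List.isChain_reverse.mpr (hmap.imp fun e e' h => h.symm)
      · simp only [List.Chain']
        rw [List.isChain_range_succ]
        intro i hi x hx y hy
        obtain ⟨w, hw⟩ := Option.isSome_iff_exists.mp (List.getLast?_isSome.mpr hL₀ne)
        rcases Nat.even_or_odd i with hev | hod
        · have hnev : ¬ Even (i+1) := by simp [Nat.even_add_one, hev]
          rw [show f i = L₀.map (· * p ^ i) from by simp [hf, hev],
            List.getLast?_map, hw] at hx
          rw [show f (i+1) = (L₀.map (· * p ^ (i+1))).reverse from by simp [hf, hnev],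
            List.head?_reverse, List.getLast?_map, hw] at hy
          simp only [Option.mem_def, Option.map_some, Option.some_inj] at hx hy
          subst hx; subst hy
          exact Or.inl ⟨p, by rw [pow_succ]; ring⟩
        · have hnev : ¬ Even i := Nat.not_even_iff_odd.mpr hod
          have hev1 : Even (i+1) := Nat.even_add_one.mpr hnev
          rw [show f i = (L₀.map (· * p ^ i)).reverse from by simp [hf, hnev],
            List.getLast?_reverse, List.head?_map, hhead] at hx
          rw [show f (i+1) = L₀.map (· * p ^ (i+1)) from by simp [hf, hev1],
            List.head?_map, hhead] at hy
          simp only [Option.mem_def, Option.map_some, Option.some_inj] at hx hy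
          subst hx; subst hy
          exact Or.inl ⟨p, by rw [pow_succ]; ring⟩

open SimpleGraph

def mkWalk {V : Type*} (G : SimpleGraph V) :
    (a : V) → (b : V) → (l : List V) → List.Chain G.Adj a (l ++ [b]) → G.Walk a b
  | _, _, [], h => Walk.cons (List.chain_cons.mp h).1 Walk.nil
  | a, b, c :: l, h =>
    Walk.cons (List.chain_cons.mp h).1 (mkWalk G c b l (List.chain_cons.mp h).2)

lemma mkWalk_support {V : Type*} (G : SimpleGraph V) :
    ∀ (a b : V) (l : List V) (h : List.Chain G.Adj a (l ++ [b])),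
      (mkWalk G a b l h).support = a :: (l ++ [b])
  | _, _, [], _ => rfl
  | a, b, c :: l, h => by
    simp [mkWalk]
    exact mkWalk_support G c b l _

lemma chain_append_singleton {α : Type*} {R : α → α → Prop} :
    ∀ {x : α} {l : List α} {y : α}, List.Chain R x l →
      (∀ z ∈ (x :: l).getLast?, R z y) → List.Chain R x (l ++ [y])
  | x, [], y, _, hr => List.Chain.cons (hr x (by simp)) List.Chain.nil
  | x, c :: l, y, hc, hr => by
    rcases List.chain_cons.mp hc with ⟨h1, h2⟩
    refine List.Chain.cons h1 (chain_append_singleton h2 ?_)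
    intro z hz
    refine hr z ?_
    rw [List.getLast?_eq_getLast (by simp)] at hz ⊢
    rw [List.getLast_cons (by simp)]
    exact hz

lemma not_mem_edges {V : Type*} {G : SimpleGraph V} {u v : V} :
    ∀ {p : G.Walk v u}, p.IsPath → 1 < p.length → s(u, v) ∉ p.edges
  | Walk.nil, _, hl => by simp at hl
  | Walk.cons (v := w) h' q, hp, hl => by
    intro hmem
    rw [Walk.edges_cons] at hmem
    rcases List.mem_cons.mp hmem with heq | hq
    · rw [Sym2.eq_iff] at heq
      rcases heq with ⟨rfl, rfl⟩ | ⟨rfl, -⟩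
      · -- u = v, w = v : contradiction since Adj v w irrefl... here u=v,v=w
        exact G.loopless.irrefl _ h'
      · -- u = w
        have hqp : q.IsPath := (Walk.cons_isPath_iff h' q).mp hp |>.1
        have : q = Walk.nil := Walk.isPath_iff_eq_nil.mp hqp
        subst this
        simp at hl
    · have hv : v ∈ q.support := Walk.snd_mem_support_of_mem_edges q hq
      exact ((Walk.cons_isPath_iff h' q).mp hp).2 hv

lemma cycle_of_list {V : Type*} [DecidableEq V] {G : SimpleGraph V} (L : List V)
    (hnd : L.Nodup) (hall : ∀ x, x ∈ L) (hlen : 3 ≤ L.length) (hch : L.Chain' G.Adj)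
    (hwrap : ∀ x ∈ L.getLast?, ∀ y ∈ L.head?, G.Adj x y) :
    ∃ (a : V) (p : G.Walk a a), p.IsHamiltonianCycle := by
  match L, hnd, hall, hlen, hch, hwrap with
  | a :: b :: t, hnd, hall, hlen, hch, hwrap =>
  have htne : t ≠ [] := by
    intro h; subst h; simp at hlen
  have h_ab : G.Adj a b := hch.rel_head
  have hcbt : List.Chain G.Adj b t := (List.chain_cons.mp hch).2
  have hlast : G.Adj ((b :: t).getLast (by simp)) a := by
    refine hwrap _ ?_ a (by simp)
    rw [List.getLast?_eq_getLast (by simp), List.getLast_cons (by simp)]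
    rfl
  have hc : List.Chain G.Adj b (t ++ [a]) := by
    refine chain_append_singleton hcbt ?_
    intro z hz
    rw [List.getLast?_eq_getLast (by simp)] at hz
    simp only [Option.mem_def, Option.some_inj] at hz
    subst hz; exact hlast
  set p : G.Walk b a := mkWalk G b a t hc with hpdef
  have psupp : p.support = b :: (t ++ [a]) := mkWalk_support G b a t hc
  have hperm : ((b :: t) ++ [a]).Perm (a :: b :: t) := List.perm_append_singleton a (b :: t)
  have ppath : p.IsPath := by
    refine Walk.IsPath.mk' ?_
    rw [psupp, show b :: (t ++ [a]) = (b :: t) ++ [a] by simp]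
    exact hperm.nodup_iff.mpr hnd
  have plen : 1 < p.length := by
    have := p.length_support
    rw [psupp] at this
    simp only [List.length_cons, List.length_append, List.length_cons, List.length_nil] at this
    have ht : 0 < t.length := List.length_pos_iff.mpr htne
    omega
  have he : s(a, b) ∉ p.edges := not_mem_edges ppath plen
  refine ⟨a, Walk.cons h_ab p, ?_⟩
  rw [SimpleGraph.Walk.isHamiltonianCycle_isCycle_and_isHamiltonian_tail]
  have cyc : (Walk.cons h_ab p).IsCycle := SimpleGraph.Path.cons_isCycle ⟨p, ppath⟩ h_ab he
  refine ⟨cyc, ?_⟩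
  intro v
  have hts : (Walk.cons h_ab p).tail.support = (Walk.cons h_ab p).support.tail :=
    Walk.support_tail_of_not_nil _ cyc.not_nil
  rw [hts, Walk.support_cons, List.tail_cons, psupp,
    show b :: (t ++ [a]) = (b :: t) ++ [a] by simp, hperm.count_eq]
  exact List.count_eq_one_of_mem hnd (hall v)

open SimpleGraph

section Helpers

lemma head_ne_getLast' {α : Type*} {l : List α} {x y : α} (hnd : l.Nodup) (hl : 2 ≤ l.length)
    (hx : x ∈ l.getLast?) (hy : y ∈ l.head?) : y ≠ x := by
  match l, hnd, hl, hx, hy with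
  | a :: b :: t, hnd, hl, hx, hy =>
    rw [List.head?_cons, Option.mem_def, Option.some_inj] at hy
    subst hy
    rw [List.getLast?_eq_getLast (by simp), List.getLast_cons (by simp),
      Option.mem_def, Option.some_inj] at hx
    have hxm : x ∈ b :: t := hx ▸ List.getLast_mem (l := b :: t) (by simp)
    exact fun h => (List.nodup_cons.mp hnd).1 (h ▸ hxm)

end Helpers

section E

variable {G : Type*} [Group G] [Finite G] [DecidableEq G] [IsCyclic G]

theorem powerGraph_cyclic_hamiltonian' (h : 3 ≤ Nat.card G) :
    ∃ (a : G) (p : (powerGraph G).Walk a a), p.IsHamiltonianCycle := by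
  classical
  obtain ⟨g, hg⟩ := IsCyclic.exists_generator (α := G)
  set n := Nat.card G with hn
  have hn0 : 0 < n := by omega
  have hord : orderOf g = n := orderOf_eq_card_of_forall_mem_zpowers hg
  obtain ⟨L, hLhead, hLnd, hLmem, hLch⟩ := exists_divisor_chain n hn0
  set block : ℕ → List ℕ :=
    fun d => ((Finset.range n).filter (fun r => Nat.gcd r n = d)).sort (· ≤ ·) with hblock
  have bmem : ∀ d r, r ∈ block d ↔ r < n ∧ Nat.gcd r n = d := by
    intro d r
    simp [hblock, Finset.mem_sort, Finset.mem_filter, Finset.mem_range]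
  have bnd : ∀ d, (block d).Nodup := fun d => Finset.sort_nodup _ _
  have bne : ∀ d ∈ L, block d ≠ [] := by
    intro d hd
    have hdn : d ∣ n := (hLmem d).mp hd
    rcases eq_or_ne d n with rfl | hne
    · exact List.ne_nil_of_mem ((bmem _ 0).mpr ⟨hn0, Nat.gcd_zero_left _⟩)
    · have hdlt : d < n := lt_of_le_of_ne (Nat.le_of_dvd hn0 hdn) hne
      exact List.ne_nil_of_mem ((bmem d d).mpr ⟨hdlt, Nat.gcd_eq_left hdn⟩)
  set R : ℕ → ℕ → Prop :=
    fun r s => r < n ∧ s < n ∧ r ≠ s ∧ (Nat.gcd r n ∣ s ∨ Nat.gcd s n ∣ r) with hR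
  set E : List ℕ := L.flatMap block with hE
  have Emem : ∀ r, r ∈ E ↔ r < n := by
    intro r
    rw [hE, List.mem_flatMap]
    constructor
    · rintro ⟨d, hd, hr⟩; exact ((bmem d r).mp hr).1
    · intro hr
      exact ⟨Nat.gcd r n, (hLmem _).mpr (Nat.gcd_dvd_right r n), (bmem _ r).mpr ⟨hr, rfl⟩⟩
  have End : E.Nodup := by
    rw [hE, List.nodup_flatMap]
    refine ⟨fun d _ => bnd d, ?_⟩
    refine hLnd.imp_of_mem ?_
    intro d d' _ _ hne r hrd hrd'
    exact hne (((bmem d r).mp hrd).2.symm.trans ((bmem d' r).mp hrd').2)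
  have Ech : E.Chain' R := by
    rw [hE]
    refine chain'_flatMap ?_ (fun d hd => bne d hd) ?_
    · intro d _
      have hs : (block d).Pairwise (· < ·) := (Finset.sortedLT_sort _).pairwise
      refine (hs.imp_of_mem ?_).isChain
      intro r s hr hs' hlt
      obtain ⟨hrn, hgr⟩ := (bmem d r).mp hr
      obtain ⟨hsn, hgs⟩ := (bmem d s).mp hs'
      refine ⟨hrn, hsn, Nat.ne_of_lt hlt, Or.inl ?_⟩
      rw [hgr, ← hgs]; exact Nat.gcd_dvd_left s n
    · have h2 : L.Chain' (fun d d' => DvdRel d d' ∧ d ≠ d') :=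
        chain'_and hLch (List.Pairwise.isChain hLnd)
      refine h2.imp ?_
      rintro d d' ⟨hdd, hne⟩ x hx y hy
      obtain ⟨hxn, hgx⟩ := (bmem d x).mp (List.mem_of_mem_getLast? hx)
      obtain ⟨hyn, hgy⟩ := (bmem d' y).mp (List.mem_of_mem_head? hy)
      refine ⟨hxn, hyn, ?_, ?_⟩
      · rintro rfl; exact hne (hgx.symm.trans hgy)
      · rcases hdd with hdd | hdd
        · refine Or.inl ?_
          rw [hgx]
          exact hdd.trans (hgy ▸ Nat.gcd_dvd_left y n)
        · refine Or.inr ?_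
          rw [hgy]
          exact hdd.trans (hgx ▸ Nat.gcd_dvd_left x n)
  have Eperm : E.Perm (List.range n) := by
    rw [List.perm_ext_iff_of_nodup End List.nodup_range]
    intro r; rw [Emem r, List.mem_range]
  have Elen : E.length = n := by rw [Eperm.length_eq, List.length_range]
  -- L starts with 1
  obtain ⟨L', rfl⟩ : ∃ L', L = 1 :: L' := by
    cases L with
    | nil => simp at hLhead
    | cons d L' =>
      rw [List.head?_cons, Option.some_inj] at hLhead
      exact ⟨L', by rw [hLhead]⟩
  have Ewrap : ∀ x ∈ E.getLast?, ∀ y ∈ E.head?, R x y := by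
    intro x hx y hy
    have hxE : x ∈ E := List.mem_of_mem_getLast? hx
    have hyb : y ∈ block 1 := by
      rw [hE, show ((1 : ℕ) :: L').flatMap block = block 1 ++ L'.flatMap block by simp,
        List.head?_append] at hy
      cases hb1 : (block 1).head? with
      | none => exact absurd (List.head?_eq_none_iff.mp hb1) (bne 1 (by simp))
      | some z =>
        rw [hb1] at hy
        rw [Option.mem_def] at hy
        have : y = z := by simpa [eq_comm] using hy
        subst this
        exact List.mem_of_mem_head? (by rw [hb1]; rfl)
    obtain ⟨hyn, hgy⟩ := (bmem 1 y).mp hyb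
    have hxn : x < n := (Emem x).mp hxE
    have hxy : y ≠ x := head_ne_getLast' End (by omega) hx hy
    exact ⟨hxn, hyn, fun hh => hxy hh.symm, Or.inr (by rw [hgy]; exact one_dvd x)⟩
  -- the vertex list
  set Vl : List G := E.map (g ^ ·) with hVl
  have Vnd : Vl.Nodup := by
    refine List.Nodup.map_on ?_ End
    intro r hr s hs hrs
    exact pow_injOn_Iio_orderOf (by simpa [hord] using (Emem r).mp hr)
      (by simpa [hord] using (Emem s).mp hs) hrs
  have Vall : ∀ x : G, x ∈ Vl := by
    intro x
    obtain ⟨r, hr, hrx⟩ := exists_pow_lt_eq hord hn0 hg x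
    exact List.mem_map.mpr ⟨r, (Emem r).mpr hr, hrx⟩
  have Vch : Vl.Chain' (powerGraph G).Adj := by
    simp only [hVl, List.Chain', List.isChain_map]
    refine Ech.imp ?_
    rintro r s ⟨hr, hs, hrs, hd | hd⟩
    · exact pow_adj hord h hr hs hrs hd
    · exact (pow_adj hord h hs hr hrs.symm hd).symm
  have Vwrap : ∀ x ∈ Vl.getLast?, ∀ y ∈ Vl.head?, (powerGraph G).Adj x y := by
    intro x hx y hy
    rw [hVl, List.getLast?_map] at hx
    rw [hVl, List.head?_map] at hy
    cases hE1 : E.getLast? with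
    | none => rw [hE1] at hx; simp at hx
    | some r =>
      cases hE2 : E.head? with
      | none => rw [hE2] at hy; simp at hy
      | some s =>
        rw [hE1] at hx; rw [hE2] at hy
        simp only [Option.map_some, Option.mem_def, Option.some_inj] at hx hy
        subst hx; subst hy
        obtain ⟨hr, hs, hrs, hd | hd⟩ := Ewrap r (by rw [hE1]; rfl) s (by rw [hE2]; rfl)
        · exact pow_adj hord h hr hs hrs hd
        · exact (pow_adj hord h hs hr hrs.symm hd).symm
  have Vlen : 3 ≤ Vl.length := by
    rw [hVl, List.length_map, Elen]; exact h
  exact cycle_of_list Vl Vnd Vall Vlen Vch Vwrap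

end E

theorem powerGraph_cyclic_hamiltonian {G : Type*} [Group G] [Finite G] [DecidableEq G]
    [IsCyclic G] (h : 3 ≤ Nat.card G) :
    ∃ (a : G) (p : (powerGraph G).Walk a a), p.IsHamiltonianCycle := by
  exact powerGraph_cyclic_hamiltonian' h
end
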